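/- arXiv:1503.04045 — 2 statements merged into one kernel-verified Lean document; each statement's English description precedes it below -/
import Mathlib

section
/- Let δ : Σ → {a,b}* map symbols injectively to strings b a^i b (i ≥ 1), extended homomorphically. For any string S, δ(S) has a diverse palindromic factorization if and only if S has a diverse palindromic factorization. -/
/-- `F` is a diverse palindromic factorization of `S`. -/
def DivPalFact {α : Type*} (S : List α) (F : List (List α)) : Prop :=
  F.flatten = S ∧ (∀ f ∈ F, f ≠ [] ∧ f.reverse = f) ∧ F.Nodup

/-- The block `b a^j b` over the binary alphabet `Bool` (`a = false`, `b = true`). -/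
def blockBA (j : ℕ) : List Bool := true :: (List.replicate j false ++ [true])

/-- The block encoding of a string, sending symbol `s` to `b a^(i s) b`,
extended homomorphically. -/
def encBA {σ : Type*} (i : σ → ℕ) (w : List σ) : List Bool :=
  (w.map fun s => blockBA (i s)).flatten

/-!
In `δ(S)`, a palindrome that starts at a block boundary and ends strictly inside a block is the single letter `b`, since `b a^j` with `j ≥ 1` and
`b a^i b ⋯ b b` with `i ≥ 1` are not palindromes; by symmetry the same holds for a palindrome that
starts strictly inside a block and ends at a boundary. Hence a palindromic factorization of `δ(S)`
that ever cuts inside a block uses the factor `b` twice, so a diverse one is the image under `δ` of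
a factorization of `S`; as `δ` is injective and commutes with reversal, that factorization is
again diverse and palindromic.
-/

open List Function

section

variable {σ : Type*} (i : σ → ℕ)

@[simp] lemma encBA_nil : encBA i [] = [] := rfl

lemma encBA_cons (s : σ) (w : List σ) :
    encBA i (s :: w) = true :: (replicate (i s) false ++ true :: encBA i w) := by
  simp [encBA, blockBA]

lemma encBA_append (u v : List σ) : encBA i (u ++ v) = encBA i u ++ encBA i v := by
  simp [encBA]

lemma encBA_flatten (G : List (List σ)) : encBA i G.flatten = (G.map (encBA i)).flatten := by
  induction G <;> simp_all [encBA_append]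

lemma encBA_reverse (w : List σ) : encBA i w.reverse = (encBA i w).reverse := by
  simp [encBA, reverse_flatten, blockBA, comp_def]

lemma encBA_eq_nil_iff {w : List σ} : encBA i w = [] ↔ w = [] := by
  cases w <;> simp [encBA_cons]

lemma replicate_false_append_true_inj {m n : ℕ} {u v : List Bool}
    (h : replicate m false ++ true :: u = replicate n false ++ true :: v) : m = n ∧ u = v := by
  induction m generalizing n <;> cases n <;> simp_all [replicate_succ]

lemma encBA_injective (hinj : Injective i) : Injective (encBA i) := by
  intro u
  induction u with
  | nil => intro v h; exact ((encBA_eq_nil_iff i).1 h.symm).symm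
  | cons s u ih =>
    intro v h
    cases v with
    | nil => exact absurd h (by simp [encBA_cons])
    | cons t v =>
      simp only [encBA_cons, cons.injEq, true_and] at h
      obtain ⟨hst, huv⟩ := replicate_false_append_true_inj h
      rw [hinj hst, ih huv]

lemma append_eq_replicate_false_append_true {f r u : List Bool} {q : ℕ}
    (h : f ++ r = replicate q false ++ true :: u) :
    (∃ j p, f = replicate j false ∧ r = replicate p false ++ true :: u) ∨
      ∃ f', f = replicate q false ++ true :: f' ∧ f' ++ r = u := by
  rcases append_eq_append_iff.1 h with ⟨a, hq, hr⟩ | ⟨_ | ⟨c, f'⟩, hf, hu⟩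
  · obtain ⟨-, hf, ha⟩ := append_eq_replicate_iff.1 hq.symm
    exact .inl ⟨_, _, hf, by rw [hr, ha]⟩
  · exact .inl ⟨q, 0, by simpa using hf, by simpa using hu.symm⟩
  · simp only [cons_append, cons.injEq] at hu
    exact .inr ⟨f', by rw [hf, hu.1], hu.2.symm⟩

lemma append_eq_encBA {f r : List Bool} {w : List σ} (h : f ++ r = encBA i w) :
    (∃ u v, w = u ++ v ∧ f = encBA i u ∧ r = encBA i v) ∨
      ∃ u v j p, f = encBA i u ++ true :: replicate j false ∧
        r = replicate p false ++ true :: encBA i v := by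
  induction w generalizing f with
  | nil =>
    obtain ⟨rfl, rfl⟩ := append_eq_nil_iff.1 h
    exact .inl ⟨[], [], rfl, rfl, rfl⟩
  | cons s w ih =>
    rw [encBA_cons] at h
    cases f with
    | nil => exact .inl ⟨[], s :: w, rfl, rfl, by rw [encBA_cons, ← h, nil_append]⟩
    | cons c f =>
      simp only [cons_append, cons.injEq] at h
      obtain ⟨rfl, h⟩ := h
      rcases append_eq_replicate_false_append_true h with ⟨j, p, rfl, hr⟩ | ⟨f', rfl, hf'⟩
      · exact .inr ⟨[], w, j, p, rfl, hr⟩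
      · rcases ih hf' with ⟨u, v, rfl, rfl, hr⟩ | ⟨u, v, j, p, rfl, hr⟩
        · exact .inl ⟨s :: u, v, rfl, by rw [encBA_cons], hr⟩
        · exact .inr ⟨s :: u, v, j, p, by simp [encBA_cons], hr⟩

lemma encBA_append_true_replicate_eq_singleton (hpos : ∀ s, 1 ≤ i s) {w : List σ} {j : ℕ}
    (h : (encBA i w ++ true :: replicate j false).reverse =
      encBA i w ++ true :: replicate j false) :
    encBA i w ++ true :: replicate j false = [true] := by
  cases j with
  | succ j => cases w <;> simpa [encBA_cons, replicate_succ'] using congrArg head? h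
  | zero =>
    cases w with
    | nil => rfl
    | cons s w =>
      obtain ⟨t, v, htv⟩ := exists_cons_of_ne_nil (reverse_ne_nil_iff.2 (cons_ne_nil s w))
      obtain ⟨k, hk⟩ := Nat.exists_eq_add_of_le' (hpos s)
      rw [reverse_append, ← encBA_reverse, htv] at h
      simp [encBA_cons, hk, replicate_succ] at h

/-- `replicate q false ++ true :: encBA i w` is what remains of `encBA i S` after a cut strictly
inside a block. -/
lemma singleton_true_mem_of_flatten_eq (hpos : ∀ s, 1 ≤ i s) {F : List (List Bool)}
    (hpal : ∀ f ∈ F, f.reverse = f) {q : ℕ} {w : List σ}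
    (h : F.flatten = replicate q false ++ true :: encBA i w) : [true] ∈ F := by
  induction F generalizing q w with
  | nil => simp at h
  | cons f F ih =>
    obtain ⟨hf, hpalF⟩ := forall_mem_cons.1 hpal
    rcases append_eq_replicate_false_append_true h with ⟨j, p, -, hr⟩ | ⟨f', rfl, hf'⟩
    · exact mem_cons_of_mem _ (ih hpalF hr)
    · rcases append_eq_encBA i hf' with ⟨u, v, -, rfl, -⟩ | ⟨u, v, j, p, -, hr⟩
      · have hmirror : (replicate q false ++ true :: encBA i u).reverse =
            encBA i u.reverse ++ true :: replicate q false := by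
          simp [encBA_reverse]
        have hsymm : (encBA i u.reverse ++ true :: replicate q false).reverse =
            encBA i u.reverse ++ true :: replicate q false := by
          rw [← hmirror, reverse_reverse, hf]
        rw [← hf, hmirror, encBA_append_true_replicate_eq_singleton i hpos hsymm]
        exact mem_cons_self
      · exact mem_cons_of_mem _ (ih hpalF hr)

lemma exists_map_encBA_of_flatten_eq (hpos : ∀ s, 1 ≤ i s) {F : List (List Bool)}
    (hpal : ∀ f ∈ F, f.reverse = f) (hnd : F.Nodup) {w : List σ} (h : F.flatten = encBA i w) :
    ∃ G : List (List σ), G.flatten = w ∧ F = G.map (encBA i) := by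
  induction F generalizing w with
  | nil => exact ⟨[], ((encBA_eq_nil_iff i).1 h.symm).symm, rfl⟩
  | cons f F ih =>
    obtain ⟨hf, hpalF⟩ := forall_mem_cons.1 hpal
    rw [nodup_cons] at hnd
    rcases append_eq_encBA i h with ⟨u, v, rfl, rfl, hr⟩ | ⟨u, v, j, p, rfl, hr⟩
    · obtain ⟨G, rfl, rfl⟩ := ih hpalF hnd.2 hr
      exact ⟨u :: G, rfl, rfl⟩
    · rw [encBA_append_true_replicate_eq_singleton i hpos hf] at hnd
      exact absurd (singleton_true_mem_of_flatten_eq i hpos hpalF hr) hnd.1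

variable {i}

lemma DivPalFact.map_encBA (hinj : Injective i) {S : List σ} {G : List (List σ)}
    (hG : DivPalFact S G) : DivPalFact (encBA i S) (G.map (encBA i)) := by
  obtain ⟨rfl, hpal, hnd⟩ := hG
  refine ⟨(encBA_flatten i G).symm, ?_, hnd.map (encBA_injective i hinj)⟩
  intro f hf
  obtain ⟨g, hg, rfl⟩ := mem_map.1 hf
  obtain ⟨hne, hrev⟩ := hpal g hg
  exact ⟨mt (encBA_eq_nil_iff i).1 hne, by rw [← encBA_reverse, hrev]⟩

lemma DivPalFact.exists_map_encBA (hinj : Injective i) (hpos : ∀ s, 1 ≤ i s) {S : List σ}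
    {F : List (List Bool)} (hF : DivPalFact (encBA i S) F) :
    ∃ G, DivPalFact S G ∧ F = G.map (encBA i) := by
  obtain ⟨hflat, hpal, hnd⟩ := hF
  obtain ⟨G, rfl, rfl⟩ :=
    exists_map_encBA_of_flatten_eq i hpos (fun f hf => (hpal f hf).2) hnd hflat
  refine ⟨G, ⟨rfl, fun g hg => ?_, hnd.of_map _⟩, rfl⟩
  obtain ⟨hne, hrev⟩ := hpal _ (mem_map_of_mem hg)
  exact ⟨mt (encBA_eq_nil_iff i).2 hne,
    encBA_injective i hinj (by rw [encBA_reverse, hrev])⟩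

end

/-- `δ(S)` has a diverse palindromic factorization iff `S` has one. -/
theorem stmt9 {σ : Type*} (i : σ → ℕ) (hinj : Function.Injective i)
    (hpos : ∀ s, 1 ≤ i s) (S : List σ) :
    (∃ F : List (List Bool), DivPalFact (encBA i S) F) ↔
    (∃ G : List (List σ), DivPalFact S G) :=
  ⟨fun ⟨_, hF⟩ => (hF.exists_map_encBA hinj hpos).imp fun _ hG => hG.1,
    fun ⟨G, hG⟩ => ⟨G.map (encBA i), hG.map_encBA hinj⟩⟩
end

section
/- For any k ≥ 1, let Q_k be the prefix of length 20k of (abbaab)^∞. Then every k-diverse palindromic factorization of Q_k uses each of the eight palindromes a, b, aa, bb, aba, bab, abba, baab exactly k times, and such a factorization exists (e.g., k copies of (abba, aba, bb, aa, bab, baab) followed by 2k single-symbol factors). -/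
/-- `F` is a `k`-diverse palindromic factorization of `S`: nonempty palindromic factors
concatenating to `S`, each distinct factor appearing at most `k` times. -/
def KDivPalFact {α : Type*} [DecidableEq α] (k : ℕ) (S : List α) (F : List (List α)) : Prop :=
  F.flatten = S ∧ (∀ f ∈ F, f ≠ [] ∧ f.reverse = f) ∧ ∀ f : List α, F.count f ≤ k

/-- The length-`20k` prefix of `(abbaab)^∞` over `Bool` (`a = false`, `b = true`). -/
def Qk (k : ℕ) : List Bool :=
  ((List.replicate (4 * k) [false, true, true, false, false, true]).flatten).take (20 * k)

/-!
A length-5 factor of `(abbaab)^∞` is never the reverse of another one, so a palindromic factor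
has length at most 4 and is one of `a, b, aa, bb, aba, bab, abba, baab`, whose lengths add up to
20. In a `k`-diverse factorization of `Q_k` each of them occurs at most `k` times while the
lengths of the factors add up to `20k`, so each occurs exactly `k` times. Conversely
`abba·aba·bb·aa·bab·baab = (abbaab)^3`, and the remaining `2k` letters of `Q_k` form an
even-length prefix of `(abbaab)^∞`, which has `k` letters of each kind.
-/

section Factorizations

variable {α : Type*} [DecidableEq α]

theorem List.count_eq_of_length_flatten_eq {F : List (List α)} {S : Finset (List α)} {k : ℕ}
    (hFS : ∀ f ∈ F, f ∈ S) (hS : ∀ p ∈ S, p ≠ []) (hcount : ∀ p, F.count p ≤ k)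
    (hlen : F.flatten.length = k * ∑ p ∈ S, p.length) :
    ∀ p ∈ S, F.count p = k := by
  have hsum : F.flatten.length = ∑ p ∈ S, F.count p * p.length := by
    rw [← Finset.sum_subset (fun f hf => hFS f (List.mem_toFinset.1 hf)) fun p _ hp => by
      rw [List.count_eq_zero.2 (mt List.mem_toFinset.2 hp), zero_mul], List.length_flatten]
    -- `Finset.sum_list_map_count` counts with the `BEq` instance of `DecidableEq (List α)`.
    convert Finset.sum_list_map_count F List.length using 1
    congr! 2
    congr 1
    apply lawful_beq_subsingleton
  have hle : ∀ p ∈ S, F.count p * p.length ≤ k * p.length := fun p _ =>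
    Nat.mul_le_mul_right _ (hcount p)
  rw [Finset.mul_sum, hsum] at hlen
  intro p hp
  exact Nat.eq_of_mul_eq_mul_right (List.length_pos_iff.2 (hS p hp))
    ((Finset.sum_eq_sum_iff_of_le hle).1 hlen p hp)

theorem KDivPalFact.append {k : ℕ} {S₁ S₂ : List α} {F₁ F₂ : List (List α)}
    (h₁ : KDivPalFact k S₁ F₁) (h₂ : KDivPalFact k S₂ F₂) (hdisj : F₁.Disjoint F₂) :
    KDivPalFact k (S₁ ++ S₂) (F₁ ++ F₂) := by
  obtain ⟨hS₁, hpal₁, hcount₁⟩ := h₁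
  obtain ⟨hS₂, hpal₂, hcount₂⟩ := h₂
  refine ⟨by rw [List.flatten_append, hS₁, hS₂], fun f hf => ?_, fun f => ?_⟩
  · rcases List.mem_append.1 hf with hf | hf
    exacts [hpal₁ f hf, hpal₂ f hf]
  · rw [List.count_append]
    by_cases hf : f ∈ F₁
    · rw [List.count_eq_zero.2 fun hf₂ => hdisj hf hf₂, add_zero]
      exact hcount₁ f
    · rw [List.count_eq_zero.2 hf, zero_add]
      exact hcount₂ f

theorem kDivPalFact_flatten_replicate {G : List (List α)} (hG : G.Nodup)
    (hpal : ∀ f ∈ G, f ≠ [] ∧ f.reverse = f) (k : ℕ) :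
    KDivPalFact k (List.replicate k G).flatten.flatten (List.replicate k G).flatten := by
  refine ⟨rfl, fun f hf => ?_, fun f => ?_⟩
  · obtain ⟨g, hg, hfg⟩ := List.mem_flatten.1 hf
    exact hpal f (List.eq_of_mem_replicate hg ▸ hfg)
  · rw [List.count_flatten, List.map_replicate, List.sum_replicate, smul_eq_mul]
    simpa using Nat.mul_le_mul_left k (List.nodup_iff_count_le_one.1 hG f)

theorem kDivPalFact_map_singleton {k : ℕ} {l : List α} (hcount : ∀ a, l.count a ≤ k) :
    KDivPalFact k l (l.map fun a => [a]) := by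
  refine ⟨by simpa [List.flatMap] using List.flatMap_singleton' l, fun f hf => ?_, fun f => ?_⟩
  · obtain ⟨a, -, rfl⟩ := List.mem_map.1 hf
    simp
  · by_cases hf : ∃ a, f = [a]
    · obtain ⟨a, rfl⟩ := hf
      rw [List.count_map_of_injective _ _ List.singleton_injective]
      exact hcount a
    · refine (List.count_eq_zero.2 fun hmem => hf ?_).trans_le (Nat.zero_le k)
      obtain ⟨a, -, rfl⟩ := List.mem_map.1 hmem
      exact ⟨a, rfl⟩

end Factorizations

namespace Stream'

variable {α : Type*}

theorem exists_eq_take_drop_of_infix_take {a : Stream' α} {f : List α} {n : ℕ}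
    (h : f <:+: a.take n) : ∃ m, f = (a.drop m).take f.length := by
  obtain ⟨p, t, hpt⟩ := h
  have hn : n = p.length + f.length + t.length := by
    simpa [Nat.add_assoc] using congrArg List.length hpt.symm
  rw [hn, take_add, take_add] at hpt
  refine ⟨p.length, (List.append_inj (List.append_inj hpt ?_).1 ?_).2⟩ <;> simp

variable (l : List α) (hl : l ≠ [])

theorem drop_length_cycle : (cycle l hl).drop l.length = cycle l hl := by
  conv_lhs => rw [cycle_eq]
  exact drop_append_stream l _

theorem drop_mod_length_cycle (m : ℕ) :
    (cycle l hl).drop (m % l.length) = (cycle l hl).drop m := by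
  have hperiod : ∀ q, (cycle l hl).drop (l.length * q) = cycle l hl := by
    intro q
    induction q with
    | zero => rfl
    | succ q ih => rw [Nat.mul_succ, ← drop_drop, ih, drop_length_cycle]
  conv_rhs => rw [← Nat.div_add_mod m l.length, ← drop_drop, hperiod]

theorem take_mul_length_cycle (m : ℕ) :
    (cycle l hl).take (m * l.length) = (List.replicate m l).flatten := by
  induction m with
  | zero => simp
  | succ m ih =>
    rw [Nat.succ_mul, Nat.add_comm, List.replicate_succ, List.flatten_cons, ← ih, append_take,
      ← cycle_eq]

end Stream'

def abbaab : List Bool := [false, true, true, false, false, true]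

def abbaabStream : Stream' Bool := Stream'.cycle abbaab (by simp [abbaab])

theorem abbaabStream_drop_mod (m : ℕ) : abbaabStream.drop (m % 6) = abbaabStream.drop m :=
  Stream'.drop_mod_length_cycle abbaab _ m

theorem abbaabStream_drop_six_mul (m : ℕ) : abbaabStream.drop (6 * m) = abbaabStream := by
  rw [← abbaabStream_drop_mod, Nat.mul_mod_right]
  rfl

theorem Qk_eq_take (k : ℕ) : Qk k = abbaabStream.take (20 * k) := by
  rw [Qk, ← abbaab, ← Stream'.take_mul_length_cycle abbaab (by simp [abbaab]),
    Stream'.take_take, min_eq_right (by simp [abbaab]; omega)]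
  rfl

def abbaabPalindromes : List (List Bool) :=
  [[false], [true], [false, false], [true, true],
   [false, true, false], [true, false, true],
   [false, true, true, false], [true, false, false, true]]

theorem reverse_take_five_ne (s t : ℕ) :
    ((abbaabStream.drop s).take 5).reverse ≠ (abbaabStream.drop t).take 5 := by
  rw [← abbaabStream_drop_mod s, ← abbaabStream_drop_mod t]
  have hfactors : ∀ s < 6, ∀ t < 6,
      ((abbaabStream.drop s).take 5).reverse ≠ (abbaabStream.drop t).take 5 := by
    decide
  exact hfactors _ (Nat.mod_lt _ (by decide)) _ (Nat.mod_lt _ (by decide))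

theorem mem_abbaabPalindromes_of_reverse_eq {s n : ℕ} (hn : n ≠ 0)
    (hpal : ((abbaabStream.drop s).take n).reverse = (abbaabStream.drop s).take n) :
    (abbaabStream.drop s).take n ∈ abbaabPalindromes := by
  rcases lt_or_ge n 5 with hn5 | hn5
  · have hshort : ∀ r < 6, ∀ n < 5, (abbaabStream.drop r).take n ∈ abbaabPalindromes ∨
        ((abbaabStream.drop r).take n).reverse ≠ (abbaabStream.drop r).take n ∨ n = 0 := by
      decide
    rw [← abbaabStream_drop_mod] at hpal ⊢
    exact ((hshort _ (Nat.mod_lt _ (by decide)) n hn5).resolve_right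
      (not_or.2 ⟨not_not.2 hpal, hn⟩))
  · exfalso
    set f := (abbaabStream.drop s).take n
    have hprefix : f.take 5 = (abbaabStream.drop s).take 5 := by simp [f, hn5]
    have hsuffix : f.drop (n - 5) = (abbaabStream.drop (s + (n - 5))).take 5 := by
      rw [← Stream'.drop_drop, Stream'.take_drop, Nat.sub_add_cancel hn5]
    apply reverse_take_five_ne (s + (n - 5)) s
    rw [← hprefix, ← hsuffix]
    conv_rhs => rw [← hpal, List.take_reverse]
    simp [f]

theorem mem_abbaabPalindromes_of_infix {k : ℕ} {f : List Bool} (hf : f <:+: Qk k) (hne : f ≠ [])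
    (hpal : f.reverse = f) : f ∈ abbaabPalindromes := by
  rw [Qk_eq_take] at hf
  obtain ⟨s, hs⟩ := Stream'.exists_eq_take_drop_of_infix_take hf
  rw [hs] at hpal ⊢
  exact mem_abbaabPalindromes_of_reverse_eq (by simpa using hne) hpal

def abbaabBlock : List (List Bool) :=
  [[false, true, true, false], [false, true, false], [true, true],
   [false, false], [true, false, true], [true, false, false, true]]

theorem take_eighteen_mul_abbaabStream (k : ℕ) :
    abbaabStream.take (18 * k) = (List.replicate k abbaabBlock).flatten.flatten := by
  induction k with
  | zero => rfl
  | succ k ih =>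
    rw [Nat.mul_succ, Nat.add_comm, Stream'.take_add, abbaabStream_drop_six_mul 3, ih]
    simp only [List.replicate_succ, List.flatten_cons, List.flatten_append]
    rfl

theorem count_take_two_mul_abbaabStream (b : Bool) (k : ℕ) :
    (abbaabStream.take (2 * k)).count b = k := by
  induction k with
  | zero => rfl
  | succ k ih =>
    have hpairs : ∀ j < 3, ((abbaabStream.drop (2 * j)).take 2).count b = 1 := by
      cases b <;> decide
    rw [Nat.mul_succ, Stream'.take_add, List.count_append, ih, ← abbaabStream_drop_mod,
      Nat.mul_mod_mul_left 2 k 3, hpairs _ (Nat.mod_lt _ (by decide))]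

theorem Qk_eq_append (k : ℕ) :
    Qk k = (List.replicate k abbaabBlock).flatten.flatten ++ abbaabStream.take (2 * k) := by
  rw [Qk_eq_take, show 20 * k = 18 * k + 2 * k by ring, Stream'.take_add,
    take_eighteen_mul_abbaabStream, show 18 * k = 6 * (3 * k) by ring, abbaabStream_drop_six_mul]

theorem kDivPalFact_Qk (k : ℕ) :
    KDivPalFact k (Qk k) ((List.replicate k abbaabBlock).flatten ++
      (abbaabStream.take (2 * k)).map fun b => [b]) := by
  rw [Qk_eq_append]
  refine (kDivPalFact_flatten_replicate (by decide) (by decide) k).append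
    (kDivPalFact_map_singleton fun b => (count_take_two_mul_abbaabStream b k).le) ?_
  intro f hblock hsingle
  obtain ⟨b, -, rfl⟩ := List.mem_map.1 hsingle
  obtain ⟨G, hG, hbG⟩ := List.mem_flatten.1 hblock
  rw [List.eq_of_mem_replicate hG] at hbG
  cases b <;> simp [abbaabBlock] at hbG

theorem stmt12_general (k : ℕ) :
    (∀ F : List (List Bool), KDivPalFact k (Qk k) F →
      ∀ p ∈ [[false], [true], [false, false], [true, true],
             [false, true, false], [true, false, true],
             [false, true, true, false], [true, false, false, true]],
        F.count p = k) ∧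
    (∃ F : List (List Bool), KDivPalFact k (Qk k) F) := by
  refine ⟨fun F ⟨hflatten, hpal, hcount⟩ p hp => ?_, ⟨_, kDivPalFact_Qk k⟩⟩
  refine List.count_eq_of_length_flatten_eq (S := abbaabPalindromes.toFinset)
    (fun f hf => List.mem_toFinset.2 ?_) (by decide) hcount ?_ p (List.mem_toFinset.2 hp)
  · exact mem_abbaabPalindromes_of_infix (hflatten ▸ List.infix_of_mem_flatten hf)
      (hpal f hf).1 (hpal f hf).2
  · rw [hflatten, Qk_eq_take, Stream'.length_take, mul_comm]
    rfl

/-- For `k ≥ 1`, every `k`-diverse palindromic factorization of `Q_k` uses each of the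
eight palindromes `a, b, aa, bb, aba, bab, abba, baab` exactly `k` times, and such a
factorization exists. -/
theorem stmt12 (k : ℕ) (hk : 1 ≤ k) :
    (∀ F : List (List Bool), KDivPalFact k (Qk k) F →
      ∀ p ∈ [[false], [true], [false, false], [true, true],
             [false, true, false], [true, false, true],
             [false, true, true, false], [true, false, false, true]],
        F.count p = k) ∧
    (∃ F : List (List Bool), KDivPalFact k (Qk k) F) :=
  stmt12_general k
end
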